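/- (Local-global formula for Betti numbers.) Let A be a finite affine hyperplane arrangement in an ℓ-dimensional affine space over a field K. Then for every k, b_k(A) = Σ_{X ∈ L_k(A)} b_k(A_X), where the sum is over all rank-k flats X of A and A_X = {H ∈ A : H ⊇ X}. -/

import Mathlib

/- Common definitions: hyperplane arrangements, intersection lattices, Möbius
functions, Betti numbers, characteristic polynomials, deconing, Ziegler
restriction, and freeness of (multi)arrangements. -/

open Module

noncomputable section
namespace ArrPaper

open scoped Classical

/-- The Möbius function of a finite poset `L` (the intersection lattice of an
arrangement, ordered by *reverse inclusion*): elements with no strict upper bound in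
the ambient order (i.e. the bottom `V` of the reverse-inclusion order) get value `1`,
and `μ(X) = -∑_{Y > X} μ(Y)` otherwise, so that `∑_{Y ≤ X} μ(Y) = 0` for `X > V`. -/
def posetMobius {α : Type*} [PartialOrder α] (L : Finset α) (x : α) : ℤ :=
  if (L.filter (fun y => x < y)).Nonempty then
    - ∑ y ∈ (L.filter (fun y => x < y)).attach, posetMobius L y.1
  else 1
termination_by (L.filter (fun y => x < y)).card
decreasing_by
  have hy := y.2
  simp only [Finset.mem_filter] at hy
  apply Finset.card_lt_card
  constructor
  · intro z hz
    simp only [Finset.mem_filter] at hz ⊢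
    exact ⟨hz.1, lt_trans hy.2 hz.2⟩
  · intro hsub
    have := hsub (Finset.mem_filter.2 ⟨hy.1, hy.2⟩)
    simp only [Finset.mem_filter] at this
    exact lt_irrefl _ this.2

variable {K V : Type*} [Field K] [AddCommGroup V] [Module K V]

/-- `H` is a linear hyperplane: the kernel of a nonzero linear form. -/
def IsLinHyp (H : Submodule K V) : Prop :=
  ∃ φ : V →ₗ[K] K, φ ≠ 0 ∧ LinearMap.ker φ = H

/-- The intersection lattice (as a `Finset`) of a finite collection `B` of linear
subspaces, inside the ambient subspace `E`: all intersections of subfamilies of `B`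
with `E` (the empty intersection giving `E` itself). -/
def LFinsetIn (E : Submodule K V) (B : Finset (Submodule K V)) : Finset (Submodule K V) :=
  B.powerset.image (fun s => (s.inf id) ⊓ E)

/-- The `k`-th Betti number of a central arrangement `B` with ambient space `E`:
`(-1)^k` times the sum of the Möbius values over the codimension-`k` elements of the
intersection lattice. -/
def cBetti (E : Submodule K V) (B : Finset (Submodule K V)) (k : ℕ) : ℤ :=
  (-1 : ℤ) ^ k *
    ∑ X ∈ (LFinsetIn E B).filter
        (fun X : Submodule K V => finrank K ↥E - finrank K ↥X = k),
      posetMobius (LFinsetIn E B) X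

/-- The characteristic polynomial `χ(B,t) = ∑_{X ∈ L(B)} μ(X) t^{dim X}` of a central
arrangement `B` in the ambient space `V`. -/
def cCharPoly (B : Finset (Submodule K V)) : Polynomial ℤ :=
  ∑ X ∈ LFinsetIn (⊤ : Submodule K V) B,
    Polynomial.C (posetMobius (LFinsetIn (⊤ : Submodule K V) B) X) *
      Polynomial.X ^ (finrank K ↥X)

/-- `H` is an affine hyperplane: nonempty, with hyperplane direction. -/
def IsAffHyp (H : AffineSubspace K V) : Prop :=
  (H : Set V).Nonempty ∧ IsLinHyp H.direction

/-- The intersection poset (as a `Finset`) of a finite collection `B` of affine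
subspaces, inside an ambient affine subspace `E`: all *nonempty* intersections of
subfamilies of `B` with `E` (the empty intersection giving `E`). -/
def aLFinset (E : AffineSubspace K V) (B : Finset (AffineSubspace K V)) :
    Finset (AffineSubspace K V) :=
  (B.powerset.image (fun s => (s.inf id) ⊓ E)).filter (fun X => (X : Set V).Nonempty)

/-- The `k`-th Betti number of an affine arrangement `B` with ambient affine space `E`. -/
def aBetti (E : AffineSubspace K V) (B : Finset (AffineSubspace K V)) (k : ℕ) : ℤ :=
  (-1 : ℤ) ^ k *
    ∑ X ∈ (aLFinset E B).filter
        (fun X => finrank K E.direction - finrank K X.direction = k),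
      posetMobius (aLFinset E B) X

/-- The affine hyperplane `{v | φ v = 1}`. -/
def levelOne (φ : V →ₗ[K] K) : AffineSubspace K V where
  carrier := {v | φ v = 1}
  smul_vsub_vadd_mem' := by
    intro c p1 p2 p3 h1 h2 h3
    simp only [Set.mem_setOf_eq] at *
    simp [vsub_eq_sub, vadd_eq_add, map_add, map_smul, map_sub, h1, h2, h3]

/-- The deconing `d_{H0}A`: the affine arrangement `{H ∩ {φ = 1} : H ∈ A \ {H0}}` in
the affine hyperplane `H0' = {φ = 1}`, where `H0 = ker φ`. -/
def deconing (A : Finset (Submodule K V)) (H0 : Submodule K V) (φ : V →ₗ[K] K) :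
    Finset (AffineSubspace K V) :=
  (A.erase H0).image (fun H => H.toAffineSubspace ⊓ levelOne φ)

/-- The underlying simple arrangement `A^{H0} = {H ∩ H0 : H ∈ A, H ≠ H0}` of the
Ziegler restriction: a collection of hyperplanes of `H0`. -/
def zieglerArr (A : Finset (Submodule K V)) (H0 : Submodule K V) :
    Finset (Submodule K V) :=
  (A.erase H0).image (fun H => H ⊓ H0)

/-- The Ziegler multiplicity `m^{H0}(X) = #{H ∈ A \ {H0} : H ∩ H0 = X}`. -/
def zieglerMult (A : Finset (Submodule K V)) (H0 : Submodule K V)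
    (X : Submodule K V) : ℕ :=
  ((A.erase H0).filter (fun H => H ⊓ H0 = X)).card

/-- The localization `A_X = {H ∈ A : H ⊇ X}`. -/
def locArr (A : Finset (Submodule K V)) (X : Submodule K V) :
    Finset (Submodule K V) :=
  A.filter (fun H => X ≤ H)

/-- The map `ρ : L(d_{H0}A) → L(A^{H0})`, sending an affine flat `X` to `KX ∩ H0`,
where `KX` is the linear span of `X`. -/
def rhoMap (H0 : Submodule K V) (X : AffineSubspace K V) : Submodule K V :=
  Submodule.span K (X : Set V) ⊓ H0

/-- The rank-`k` (codimension computed inside `H0`) part of the intersection lattice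
of the Ziegler restriction `A^{H0}`. -/
def restL (A : Finset (Submodule K V)) (H0 : Submodule K V) (k : ℕ) :
    Finset (Submodule K V) :=
  (LFinsetIn H0 (zieglerArr A H0)).filter
    (fun X : Submodule K V => finrank K ↥H0 - finrank K ↥X = k)

/-- The linear form `φ` on `K^n` as a degree-one polynomial `∑ φ(e_i)·x_i`. -/
def formPoly {n : ℕ} (φ : (Fin n → K) →ₗ[K] K) : MvPolynomial (Fin n) K :=
  ∑ i, MvPolynomial.C (φ (Pi.single i 1)) * MvPolynomial.X i

/-- The module `D(B,m)` of logarithmic derivations of a multiarrangement in `K^n`: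
derivations `θ` of `S = K[x_1,…,x_n]` such that `θ(α_H) ∈ (α_H^{m(H)})` for every
`H ∈ B` (for every defining linear form `α_H` of `H`). -/
def arrDeriv {n : ℕ} (B : Finset (Submodule K (Fin n → K)))
    (m : Submodule K (Fin n → K) → ℕ) :
    Submodule (MvPolynomial (Fin n) K)
      (Derivation K (MvPolynomial (Fin n) K) (MvPolynomial (Fin n) K)) where
  carrier := {θ | ∀ H ∈ B, ∀ φ : (Fin n → K) →ₗ[K] K, φ ≠ 0 → LinearMap.ker φ = H →
    θ (formPoly φ) ∈ Ideal.span {formPoly φ ^ m H}}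
  add_mem' := by
    intro a b ha hb H hH φ h0 hker
    simpa using add_mem (ha H hH φ h0 hker) (hb H hH φ h0 hker)
  zero_mem' := by
    intro H hH φ h0 hker
    simp
  smul_mem' := by
    intro c a ha H hH φ h0 hker
    simpa using Ideal.mul_mem_left _ c (ha H hH φ h0 hker)

/-- A derivation of `K[x_1,…,x_n]` is homogeneous of (polynomial) degree `d` if it
sends each variable to a homogeneous polynomial of degree `d`. -/
def derivHomog {n : ℕ}
    (θ : Derivation K (MvPolynomial (Fin n) K) (MvPolynomial (Fin n) K)) (d : ℕ) :
    Prop :=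
  ∀ i, (θ (MvPolynomial.X i)).IsHomogeneous d

/-- Freeness of a multiarrangement `(B, m)` in `K^n` with exponents `d`: `D(B,m)` has a
homogeneous basis of degrees `d 0, …, d (n-1)`. -/
def multiFreeExp {n : ℕ} (B : Finset (Submodule K (Fin n → K)))
    (m : Submodule K (Fin n → K) → ℕ) (d : Fin n → ℕ) : Prop :=
  ∃ b : Basis (Fin n) (MvPolynomial (Fin n) K) ↥(arrDeriv B m),
    ∀ i, derivHomog
      ((b i : Derivation K (MvPolynomial (Fin n) K) (MvPolynomial (Fin n) K))) (d i)

/-- Freeness of a multiarrangement in `K^n`. -/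
def multiFree {n : ℕ} (B : Finset (Submodule K (Fin n → K)))
    (m : Submodule K (Fin n → K) → ℕ) : Prop :=
  ∃ d, multiFreeExp B m d

/-- Freeness of a simple central arrangement `A` in `K^n`: freeness of `(A, m ≡ 1)`. -/
def arrFree {n : ℕ} (A : Finset (Submodule K (Fin n → K))) : Prop :=
  multiFree A (fun _ => 1)

/-- The Ziegler restriction `(A^{H0}, m^{H0})` is free with exponents `d`: for every
linear identification `e : H0 ≅ K^{ℓ-1}`, the transported multiarrangement (with the
transported Ziegler multiplicity) is free with exponents `d`. -/
def zieglerFreeExp {ℓ : ℕ} (A : Finset (Submodule K (Fin ℓ → K)))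
    (H0 : Submodule K (Fin ℓ → K)) (d : Fin (ℓ - 1) → ℕ) : Prop :=
  ∀ e : ↥H0 ≃ₗ[K] (Fin (ℓ - 1) → K),
    multiFreeExp
      ((zieglerArr A H0).image
        (fun Y => (Y.comap H0.subtype).map (e : ↥H0 →ₗ[K] (Fin (ℓ - 1) → K))))
      (fun Z => zieglerMult A H0
        ((Z.comap (e : ↥H0 →ₗ[K] (Fin (ℓ - 1) → K))).map H0.subtype))
      d

/-- Freeness of the Ziegler restriction `(A^{H0}, m^{H0})`. -/
def zieglerFree {ℓ : ℕ} (A : Finset (Submodule K (Fin ℓ → K)))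
    (H0 : Submodule K (Fin ℓ → K)) : Prop :=
  ∃ d, zieglerFreeExp A H0 d

/-- The exponent vector `(a, b, 0, …, 0)`. -/
def expVec {n : ℕ} (ab : ℕ × ℕ) : Fin n → ℕ :=
  fun i => if (i : ℕ) = 0 then ab.1 else if (i : ℕ) = 1 then ab.2 else 0

/-! The Möbius value `μ(X)` is computed from the upper interval `{Y ∈ L(A) : Y ≥ X}` alone,
and `L(A_X)` is exactly that interval, so `μ_{A_X}(X) = μ_A(X)`. Since `X` is the unique
rank-`k` flat of `A_X`, this gives `b_k(A_X) = (-1)^k μ_A(X)`, and summing over `L_k(A)`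
yields `b_k(A)`. -/

section Mobius

variable {α : Type*} [PartialOrder α]

theorem posetMobius_eq (L : Finset α) (x : α) :
    posetMobius L x =
      if (L.filter (fun y => x < y)).Nonempty then
        - ∑ y ∈ L.filter (fun y => x < y), posetMobius L y
      else 1 := by
  rw [posetMobius, Finset.sum_attach]

theorem card_filter_lt_lt_card_filter_lt {L : Finset α} {x y : α} (hy : y ∈ L) (hxy : x < y) :
    (L.filter (fun z => y < z)).card < (L.filter (fun z => x < z)).card := by
  refine Finset.card_lt_card ((Finset.ssubset_iff_of_subset ?_).2 ⟨y, ?_, ?_⟩)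
  · exact Finset.monotone_filter_right L fun _ _ hyz => hxy.trans hyz
  · exact Finset.mem_filter.2 ⟨hy, hxy⟩
  · simp

theorem posetMobius_congr {L L' : Finset α} {x : α}
    (h : ∀ y, x ≤ y → L'.filter (fun z => y < z) = L.filter (fun z => y < z)) :
    posetMobius L' x = posetMobius L x := by
  rw [posetMobius_eq L', posetMobius_eq L, h x le_rfl]
  congr 1
  refine congrArg Neg.neg (Finset.sum_congr rfl fun y hy => ?_)
  have hxy := (Finset.mem_filter.1 hy).2
  exact posetMobius_congr fun z hyz => h z (hxy.le.trans hyz)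
termination_by (L.filter (fun z => x < z)).card
decreasing_by exact card_filter_lt_lt_card_filter_lt (Finset.mem_filter.1 hy).1 hxy

theorem posetMobius_filter_le (L : Finset α) {x y : α} (hxy : x ≤ y) :
    posetMobius (L.filter (fun z => x ≤ z)) y = posetMobius L y :=
  posetMobius_congr fun z hyz => by
    rw [Finset.filter_filter]
    exact Finset.filter_congr fun w _ => ⟨And.right, fun h => ⟨hxy.trans (hyz.trans h.le), h⟩⟩

end Mobius

section Affine

variable {K V : Type*} [Field K] [AddCommGroup V] [Module K V]

theorem le_of_mem_aLFinset {E X : AffineSubspace K V} {B : Finset (AffineSubspace K V)}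
    (hX : X ∈ aLFinset E B) : X ≤ E := by
  obtain ⟨⟨s, -, rfl⟩, -⟩ := by simpa [aLFinset] using hX
  exact inf_le_right

theorem nonempty_of_mem_aLFinset {E X : AffineSubspace K V} {B : Finset (AffineSubspace K V)}
    (hX : X ∈ aLFinset E B) : (X : Set V).Nonempty :=
  (Finset.mem_filter.1 hX).2

theorem aLFinset_filter_le {E X : AffineSubspace K V} {B : Finset (AffineSubspace K V)}
    (hX : X ∈ aLFinset E B) :
    aLFinset E (B.filter (fun H => X ≤ H)) = (aLFinset E B).filter (fun Y => X ≤ Y) := by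
  have hXE := le_of_mem_aLFinset hX
  ext Y
  simp only [aLFinset, Finset.mem_filter, Finset.mem_image, Finset.mem_powerset]
  constructor
  · rintro ⟨⟨s, hs, rfl⟩, hne⟩
    refine ⟨⟨⟨s, fun H hH => (Finset.mem_filter.1 (hs hH)).1, rfl⟩, hne⟩, ?_⟩
    exact le_inf (Finset.le_inf fun H hH => (Finset.mem_filter.1 (hs hH)).2) hXE
  · rintro ⟨⟨⟨s, hs, rfl⟩, hne⟩, hXY⟩
    exact ⟨⟨s, fun H hH => Finset.mem_filter.2
      ⟨hs hH, hXY.trans (inf_le_left.trans (Finset.inf_le hH))⟩, rfl⟩, hne⟩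

theorem eq_of_le_of_finrank_direction_le [FiniteDimensional K V] {X Y : AffineSubspace K V}
    (hXY : X ≤ Y) (hX : (X : Set V).Nonempty)
    (hfin : finrank K Y.direction ≤ finrank K X.direction) : X = Y :=
  AffineSubspace.eq_of_direction_eq_of_nonempty_of_le
    (Submodule.eq_of_le_of_finrank_le (AffineSubspace.direction_le hXY) hfin) hX hXY

theorem filter_le_filter_codim_eq_singleton [FiniteDimensional K V] {E X : AffineSubspace K V}
    {B : Finset (AffineSubspace K V)} {k : ℕ} (hX : X ∈ aLFinset E B)
    (hk : finrank K E.direction - finrank K X.direction = k) :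
    ((aLFinset E B).filter (fun Y => X ≤ Y)).filter
        (fun Y => finrank K E.direction - finrank K Y.direction = k) = {X} := by
  ext Y
  simp only [Finset.mem_filter, Finset.mem_singleton]
  constructor
  · rintro ⟨⟨hY, hXY⟩, hYk⟩
    have hYE := Submodule.finrank_mono (AffineSubspace.direction_le (le_of_mem_aLFinset hY))
    exact (eq_of_le_of_finrank_direction_le hXY (nonempty_of_mem_aLFinset hX) (by omega)).symm
  · rintro rfl
    exact ⟨⟨hX, le_rfl⟩, hk⟩

theorem aBetti_eq_sum_aBetti_filter [FiniteDimensional K V] (E : AffineSubspace K V)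
    (B : Finset (AffineSubspace K V)) (k : ℕ) :
    aBetti E B k =
      ∑ X ∈ (aLFinset E B).filter
          (fun X => finrank K E.direction - finrank K X.direction = k),
        aBetti E (B.filter (fun H => X ≤ H)) k := by
  rw [aBetti, Finset.mul_sum]
  refine Finset.sum_congr rfl fun X hX => ?_
  obtain ⟨hXL, hXk⟩ := Finset.mem_filter.1 hX
  rw [aBetti, aLFinset_filter_le hXL, filter_le_filter_codim_eq_singleton hXL hXk,
    Finset.sum_singleton, posetMobius_filter_le _ le_rfl]

end Affine

theorem betti_local_global_general
    {K : Type*} [Field K] (ℓ : ℕ)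
    (A : Finset (AffineSubspace K (Fin ℓ → K))) (k : ℕ) :
    aBetti (⊤ : AffineSubspace K (Fin ℓ → K)) A k =
      ∑ X ∈ (aLFinset (⊤ : AffineSubspace K (Fin ℓ → K)) A).filter
          (fun X => finrank K (⊤ : AffineSubspace K (Fin ℓ → K)).direction -
            finrank K X.direction = k),
        aBetti (⊤ : AffineSubspace K (Fin ℓ → K)) (A.filter (fun H => X ≤ H)) k :=
  aBetti_eq_sum_aBetti_filter ⊤ A k

/-- local-global formula for Betti numbers. For a finite affine
arrangement `A` in the `ℓ`-dimensional affine space `K^ℓ`, for every `k`: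
`b_k(A) = ∑_{X ∈ L_k(A)} b_k(A_X)`. -/
theorem betti_local_global
    {K : Type*} [Field K] (ℓ : ℕ)
    (A : Finset (AffineSubspace K (Fin ℓ → K))) (hA : ∀ H ∈ A, IsAffHyp H) (k : ℕ) :
    aBetti (⊤ : AffineSubspace K (Fin ℓ → K)) A k =
      ∑ X ∈ (aLFinset (⊤ : AffineSubspace K (Fin ℓ → K)) A).filter
          (fun X => finrank K (⊤ : AffineSubspace K (Fin ℓ → K)).direction -
            finrank K X.direction = k),
        aBetti (⊤ : AffineSubspace K (Fin ℓ → K)) (A.filter (fun H => X ≤ H)) k :=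
  betti_local_global_general ℓ A k

end ArrPaper
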